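/- Fix α ∈ Λ and assume the Fock form is positive semidefinite on each F_k. Then the sesquilinear form on the free complex vector space with basis {e_β : β ∈ Λ, β ∼ α} determined by ⟨e_β, e_γ⟩ = q(γ,β) is a well-defined Hermitian positive-semidefinite form; moreover, whenever σ^m(β) = σ^m(γ) one has ⟨e_β, e_γ⟩ = ⟨e_{(β_1,…,β_m)}, e_{(γ_1,…,γ_m)}⟩_F, and ⟨e_β, e_γ⟩ = 0 if no such m exists. -/

import Mathlib

open scoped BigOperators InnerProductSpace

namespace QCstar

variable {d : ℕ}

/-- `q(j,α)`: product of `q j a` over the prefix of `α` preceding the first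
occurrence of `j` (the whole list if `j` does not occur in `α`). -/
def qOne (q : Fin d → Fin d → ℂ) (j : Fin d) (α : List (Fin d)) : ℂ :=
  ((α.takeWhile fun a => a ≠ j).map (q j)).prod

/-- `q(α,β)` for finite multiindices, defined by recursion on `α`. -/
def qMul (q : Fin d → Fin d → ℂ) : List (Fin d) → List (Fin d) → ℂ
  | [], _ => 1
  | a :: α, β => qOne q a β * qMul q α (β.erase a)

/-- `s_α = s_{α₁} ⋯ s_{α_m}`. -/
def sWord {A : Type*} [Monoid A] (s : Fin d → A) (α : List (Fin d)) : A :=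
  (α.map s).prod

/-- The shift on infinite multiindices. -/
def shift (β : ℕ → Fin d) : ℕ → Fin d := fun n => β (n + 1)

/-- The finite multiindex `(β₁,…,β_m)`. -/
def prefixList (β : ℕ → Fin d) (m : ℕ) : List (Fin d) :=
  List.ofFn fun i : Fin m => β i

/-- `β ∼ α`: the tails agree up to a shift. -/
def equivTail (β α : ℕ → Fin d) : Prop := ∃ m n, shift^[m] β = shift^[n] α

/-- `q(α,β)` for infinite multiindices: the limit of `q` of the prefixes. -/
noncomputable def qInf (q : Fin d → Fin d → ℂ) (α β : ℕ → Fin d) : ℂ :=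
  Filter.limUnder Filter.atTop fun m => qMul q (prefixList α m) (prefixList β m)

/-- `(j, β₁, β₂, …)`. -/
def consSeq (j : Fin d) (β : ℕ → Fin d) : ℕ → Fin d
  | 0 => j
  | n + 1 => β n

open Classical in
/-- `β ∖ j` for an infinite multiindex: remove the first occurrence of `j`. -/
noncomputable def eraseInf (j : Fin d) (β : ℕ → Fin d) : ℕ → Fin d :=
  if h : ∃ n, β n = j then fun k => if k < Nat.find h then β k else β (k + 1) else β

open Classical in
/-- `q(j,β)` for an infinite multiindex containing `j`. -/
noncomputable def qOneInf (q : Fin d → Fin d → ℂ) (j : Fin d) (β : ℕ → Fin d) : ℂ :=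
  if h : ∃ n, β n = j then ∏ k ∈ Finset.range (Nat.find h), q j (β k) else 0

/-- Entries of the Fock form. -/
noncomputable def fockEntry (q : Fin d → Fin d → ℂ) (α β : List (Fin d)) : ℂ :=
  if β.Perm α then qMul q β α else 0

/-- The Fock sesquilinear form on the free complex vector space with basis the
finite multiindices (conjugate-linear in the first argument). -/
noncomputable def fockForm (q : Fin d → Fin d → ℂ) (x y : List (Fin d) →₀ ℂ) : ℂ :=
  ∑ α ∈ x.support, ∑ β ∈ y.support, (starRingEnd ℂ) (x α) * y β * fockEntry q α β

/-- The sesquilinear form on the free complex vector space with basis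
`{e_β : β ∼ α}`, determined by `⟨e_β, e_γ⟩ = q(γ,β)` (conjugate-linear in the
first argument). -/
noncomputable def tailForm (q : Fin d → Fin d → ℂ) (α : ℕ → Fin d)
    (x y : {β : ℕ → Fin d // equivTail β α} →₀ ℂ) : ℂ :=
  ∑ β ∈ x.support, ∑ γ ∈ y.support, (starRingEnd ℂ) (x β) * y γ * qInf q γ.1 β.1

/-!
Write `β_m` for the prefix of length `m` of an infinite multiindex `β`. A common tail
contributes nothing to `q`, so once `β` and `γ` agree from index `m` on and `γ_m` is a permutation
of `β_m`, the finite values `q(γ_n, β_n)` are constant in `n ≥ m`. In every other case `γ_n` fails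
to be a permutation of `β_n` for infinitely many `n`, and each such `n` forces a factor `q_{ij}`
with `i ≠ j` into `q(γ_n, β_n)`; with `r = max |q_{ij}| < 1` this gives
`|q(γ_n, β_n)| ≤ r ^ #{ℓ < n | γ_ℓ ≁ β_ℓ} → 0`. So `q(γ, β)` is the limit of the Fock entries
`⟨e_{β_m}, e_{γ_m}⟩_F`, and Hermitian symmetry and positivity pass to the limit from the Fock
forms on the spaces `F_m`.
-/

open Filter Topology Finset
open scoped NNReal

lemma Nat.count_le_add_count {p p' : ℕ → Prop} [DecidablePred p] [DecidablePred p'] {a : ℕ}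
    (h : ∀ k, a ≤ k → p k → p' k) (n : ℕ) : Nat.count p n ≤ a + Nat.count p' n := by
  simp only [Nat.count_eq_card_filter_range]
  calc #{k ∈ range n | p k} ≤ #(range a ∪ {k ∈ range n | p' k}) := by
        refine card_le_card fun k hk => ?_
        rw [mem_filter] at hk
        by_cases hka : k < a
        · exact mem_union_left _ (mem_range.2 hka)
        · exact mem_union_right _ (mem_filter.2 ⟨hk.1, h k (not_lt.1 hka) hk.2⟩)
    _ ≤ a + #{k ∈ range n | p' k} := (card_union_le _ _).trans (by rw [card_range])

lemma Nat.tendsto_count_atTop {p : ℕ → Prop} [DecidablePred p] (hp : (Set.ofPred p).Infinite) :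
    Tendsto (Nat.count p) atTop atTop :=
  tendsto_atTop_atTop.2 fun K => ⟨Nat.nth p K, fun _ hm =>
    (Nat.count_nth_of_infinite hp K).symm.le.trans (Nat.count_monotone p hm)⟩

section lists

variable {ι : Type*} [DecidableEq ι]

lemma take_succ_perm_cons_take_erase {u w : List ι} {c : ι} (hcu : c ∉ u) {ℓ : ℕ}
    (hℓ : u.length ≤ ℓ) :
    ((u ++ c :: w).take (ℓ + 1)).Perm (c :: ((u ++ c :: w).erase c).take ℓ) := by
  rw [List.erase_append_right _ hcu, List.erase_cons_head, List.take_append, List.take_append,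
    List.take_of_length_le (by omega), List.take_of_length_le hℓ, Nat.sub_add_comm hℓ,
    List.take_succ_cons]
  exact List.perm_middle

def unbalancedCount (X B : List ι) : ℕ :=
  Nat.count (fun ℓ => ¬ (X.take ℓ).Perm (B.take ℓ)) X.length

/- Past the first occurrence of `c` in `B`, the prefixes of `c :: X` and `B` are balanced exactly
when those of `X` and `B.erase c` are. -/
lemma unbalancedCount_cons_le (c : ι) {X B : List ι} (h : X.length < B.length) :
    unbalancedCount (c :: X) B ≤
      (B.takeWhile fun a => a ≠ c).length + unbalancedCount X (B.erase c) := by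
  unfold unbalancedCount
  rw [List.length_cons, Nat.count_succ']
  simp only [List.take_zero, List.Perm.refl, not_true_eq_false, if_false, add_zero,
    List.take_succ_cons]
  by_cases hc : c ∈ B
  · obtain ⟨u, w, rfl, hcu⟩ := List.eq_append_cons_of_mem hc
    rw [List.takeWhile_append_of_pos (by simpa using fun a ha (hac : a = c) => hcu (hac ▸ ha)),
      List.takeWhile_cons_of_neg (by simp), List.append_nil]
    refine Nat.count_le_add_count (fun k hk hbad hperm => hbad ?_) _
    exact (List.perm_cons c |>.2 hperm).trans (take_succ_perm_cons_take_erase hcu hk).symm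
  · rw [List.takeWhile_eq_self_iff.2 (by simpa using fun a ha (hac : a = c) => hc (hac ▸ ha))]
    exact (Nat.count_le _).trans (h.le.trans (Nat.le_add_right _ _))

end lists

variable (q : Fin d → Fin d → ℂ)

lemma qOne_cons_self (j : Fin d) (t : List (Fin d)) : qOne q j (j :: t) = 1 := by
  simp [qOne]

lemma qOne_cons_of_ne {j a : Fin d} (h : a ≠ j) (t : List (Fin d)) :
    qOne q j (a :: t) = q j a * qOne q j t := by
  simp [qOne, h]

lemma qMul_self (A : List (Fin d)) : qMul q A A = 1 := by
  induction A with
  | nil => rfl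
  | cons a t ih => rw [qMul, qOne_cons_self, List.erase_cons_head, ih, one_mul]

lemma qOne_append_of_mem {c : Fin d} {b : List (Fin d)} (h : c ∈ b) (t : List (Fin d)) :
    qOne q c (b ++ t) = qOne q c b := by
  induction b with
  | nil => simp at h
  | cons a b ih =>
    by_cases hac : a = c
    · subst hac; rw [List.cons_append, qOne_cons_self, qOne_cons_self]
    · rw [List.cons_append, qOne_cons_of_ne q hac, qOne_cons_of_ne q hac,
        ih (by simpa [Ne.symm hac] using h)]

lemma qMul_append_append_of_perm {g b : List (Fin d)} (h : g.Perm b) (t : List (Fin d)) :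
    qMul q (g ++ t) (b ++ t) = qMul q g b := by
  induction g generalizing b with
  | nil => rw [h.symm.eq_nil]; simp [qMul_self, qMul]
  | cons c g ih =>
    obtain ⟨hc, hg⟩ := List.cons_perm_iff_perm_erase.1 h
    rw [List.cons_append, qMul, qMul, qOne_append_of_mem q hc, List.erase_append_left _ hc, ih hg]

lemma exists_nnnorm_le_of_nnnorm_lt_one (hlt : ∀ i j : Fin d, i ≠ j → ‖q i j‖ < 1) :
    ∃ r : ℝ≥0, r < 1 ∧ ∀ i j, i ≠ j → ‖q i j‖₊ ≤ r := by
  let f : {p : Fin d × Fin d // p.1 ≠ p.2} → ℝ≥0 := fun p => ‖q p.1.1 p.1.2‖₊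
  exact ⟨univ.sup f, (Finset.sup_lt_iff zero_lt_one).2 fun p _ => hlt _ _ p.2,
    fun i j hij => le_sup (f := f) (mem_univ ⟨(i, j), hij⟩)⟩

section norm

variable {q} {r : ℝ≥0} (hq : ∀ i j, i ≠ j → ‖q i j‖₊ ≤ r)
include hq

lemma nnnorm_qOne_le (c : Fin d) (B : List (Fin d)) :
    ‖qOne q c B‖₊ ≤ r ^ (B.takeWhile fun a => a ≠ c).length := by
  rw [qOne, List.nnnorm_prod, List.map_map, ← List.length_map (f := nnnorm ∘ q c)]
  refine List.prod_le_pow_card _ r fun x hx => ?_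
  obtain ⟨a, ha, rfl⟩ := List.mem_map.1 hx
  exact hq c a (Ne.symm (by simpa using List.mem_takeWhile_imp ha))

lemma nnnorm_qMul_le (hr : r ≤ 1) :
    ∀ X B : List (Fin d), X.length ≤ B.length → ‖qMul q X B‖₊ ≤ r ^ unbalancedCount X B
  | [], _, _ => by simp [qMul, unbalancedCount]
  | c :: X, B, h => by
    have hX : X.length ≤ (B.erase c).length := by
      have := List.le_length_erase (a := c) (l := B)
      rw [List.length_cons] at h
      omega
    calc ‖qMul q (c :: X) B‖₊
        = ‖qOne q c B‖₊ * ‖qMul q X (B.erase c)‖₊ := by rw [qMul, nnnorm_mul]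
      _ ≤ r ^ (B.takeWhile fun a => a ≠ c).length * r ^ unbalancedCount X (B.erase c) :=
          mul_le_mul' (nnnorm_qOne_le hq c B) (nnnorm_qMul_le hr X _ hX)
      _ ≤ r ^ unbalancedCount (c :: X) B := by
          rw [← pow_add]
          exact pow_le_pow_of_le_one zero_le hr (unbalancedCount_cons_le c h)

end norm

section prefixes

variable {β γ : ℕ → Fin d}

lemma shift_iterate_apply (β : ℕ → Fin d) (m n : ℕ) : shift^[m] β n = β (n + m) := by
  induction m generalizing β with
  | zero => rfl
  | succ m ih => rw [Function.iterate_succ_apply, ih]; rfl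

lemma length_prefixList (β : ℕ → Fin d) (m : ℕ) : (prefixList β m).length = m :=
  List.length_ofFn

lemma prefixList_add (β : ℕ → Fin d) (m k : ℕ) :
    prefixList β (m + k) = prefixList β m ++ List.ofFn fun i : Fin k => β (m + i) := by
  simp [prefixList, List.ofFn_add]

lemma take_prefixList (β : ℕ → Fin d) {ℓ m : ℕ} (h : ℓ ≤ m) :
    (prefixList β m).take ℓ = prefixList β ℓ := by
  obtain ⟨k, rfl⟩ := Nat.exists_eq_add_of_le h
  rw [prefixList_add, List.take_left' (length_prefixList β ℓ)]

lemma unbalancedCount_prefixList (β γ : ℕ → Fin d) (m : ℕ) :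
    unbalancedCount (prefixList γ m) (prefixList β m) =
      Nat.count (fun ℓ => ¬ (prefixList γ ℓ).Perm (prefixList β ℓ)) m := by
  rw [unbalancedCount, length_prefixList]
  simp only [Nat.count_eq_card_filter_range]
  congr 1
  refine filter_congr fun ℓ hℓ => ?_
  rw [take_prefixList γ (mem_range.1 hℓ).le, take_prefixList β (mem_range.1 hℓ).le]

lemma shift_iterate_eq_of_le {m n : ℕ} (h : shift^[m] β = shift^[m] γ) (hmn : m ≤ n) :
    shift^[n] β = shift^[n] γ := by
  obtain ⟨k, rfl⟩ := Nat.exists_eq_add_of_le' hmn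
  rw [Function.iterate_add_apply, h, ← Function.iterate_add_apply]

lemma exists_prefixList_eq_append {m n : ℕ} (h : shift^[m] β = shift^[m] γ) (hmn : m ≤ n) :
    ∃ t, prefixList β n = prefixList β m ++ t ∧ prefixList γ n = prefixList γ m ++ t := by
  obtain ⟨k, rfl⟩ := Nat.exists_eq_add_of_le hmn
  refine ⟨List.ofFn fun i : Fin k => β (m + i), prefixList_add β m k, ?_⟩
  rw [prefixList_add]
  congr 2
  funext i
  simpa [shift_iterate_apply, add_comm] using (congrFun h i).symm

lemma exists_shift_eq_of_eventually_perm
    (h : ∀ᶠ m in atTop, (prefixList γ m).Perm (prefixList β m)) :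
    ∃ m, shift^[m] β = shift^[m] γ := by
  obtain ⟨L, hL⟩ := eventually_atTop.1 h
  refine ⟨L, funext fun n => ?_⟩
  have hstep := hL (n + L + 1) (by omega)
  rw [prefixList_add _ (n + L) 1, prefixList_add _ (n + L) 1] at hstep
  have hlast := (List.perm_append_left_iff _).1
    (((hL (n + L) (by omega)).append_right _).symm.trans hstep)
  simpa [shift_iterate_apply] using (List.singleton_perm_singleton.1 hlast).symm

end prefixes

section limits

variable {q} {β γ : ℕ → Fin d}

lemma fockEntry_append_append (A B t : List (Fin d)) :
    fockEntry q (A ++ t) (B ++ t) = fockEntry q A B := by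
  unfold fockEntry
  by_cases h : B.Perm A
  · rw [if_pos ((List.perm_append_right_iff t).2 h), if_pos h, qMul_append_append_of_perm q h]
  · rw [if_neg (mt (List.perm_append_right_iff t).1 h), if_neg h]

lemma fockEntry_prefixList_of_shift_eq {m n : ℕ} (h : shift^[m] β = shift^[m] γ) (hmn : m ≤ n) :
    fockEntry q (prefixList β n) (prefixList γ n) =
      fockEntry q (prefixList β m) (prefixList γ m) := by
  obtain ⟨t, hβ, hγ⟩ := exists_prefixList_eq_append h hmn
  rw [hβ, hγ, fockEntry_append_append]

lemma tendsto_qMul_prefixList_zero {r : ℝ≥0} (hr : r < 1) (hq : ∀ i j, i ≠ j → ‖q i j‖₊ ≤ r)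
    (h : ∃ᶠ m in atTop, ¬ (prefixList γ m).Perm (prefixList β m)) :
    Tendsto (fun m => qMul q (prefixList γ m) (prefixList β m)) atTop (𝓝 0) := by
  have hcount := Nat.tendsto_count_atTop (Nat.frequently_atTop_iff_infinite.1 h)
  refine squeeze_zero_norm (fun m => ?_)
    ((tendsto_pow_atTop_nhds_zero_of_lt_one r.2 (NNReal.coe_lt_one.2 hr)).comp hcount)
  have := nnnorm_qMul_le hq hr.le (prefixList γ m) (prefixList β m)
    (by rw [length_prefixList, length_prefixList])
  rw [unbalancedCount_prefixList] at this
  exact_mod_cast this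

lemma tendsto_qMul_prefixList (hlt : ∀ i j : Fin d, i ≠ j → ‖q i j‖ < 1) (β γ : ℕ → Fin d) :
    Tendsto (fun m => qMul q (prefixList γ m) (prefixList β m)) atTop (𝓝 (qInf q γ β)) := by
  refine tendsto_nhds_limUnder ?_
  by_cases h : ∀ᶠ m in atTop, (prefixList γ m).Perm (prefixList β m)
  · obtain ⟨m, hm⟩ := exists_shift_eq_of_eventually_perm h
    obtain ⟨n, hperm, hmn⟩ := (h.and (eventually_ge_atTop m)).exists
    refine ⟨qMul q (prefixList γ n) (prefixList β n),
      tendsto_atTop_of_eventually_const (i₀ := n) fun k hk => ?_⟩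
    obtain ⟨t, hβ, hγ⟩ := exists_prefixList_eq_append (shift_iterate_eq_of_le hm hmn) hk
    rw [hβ, hγ, qMul_append_append_of_perm q hperm]
  · obtain ⟨r, hr, hq⟩ := exists_nnnorm_le_of_nnnorm_lt_one q hlt
    exact ⟨0, tendsto_qMul_prefixList_zero hr hq (not_eventually.1 h)⟩

lemma tendsto_fockEntry_prefixList (hlt : ∀ i j : Fin d, i ≠ j → ‖q i j‖ < 1)
    (β γ : ℕ → Fin d) :
    Tendsto (fun m => fockEntry q (prefixList β m) (prefixList γ m)) atTop
      (𝓝 (qInf q γ β)) := by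
  by_cases h : ∀ᶠ m in atTop, (prefixList γ m).Perm (prefixList β m)
  · exact (tendsto_qMul_prefixList hlt β γ).congr' (h.mono fun m hm => (if_pos hm).symm)
  · obtain ⟨r, hr, hq⟩ := exists_nnnorm_le_of_nnnorm_lt_one q hlt
    have h0 := tendsto_qMul_prefixList_zero hr hq (not_eventually.1 h)
    rw [tendsto_nhds_unique (tendsto_qMul_prefixList hlt β γ) h0]
    refine squeeze_zero_norm (fun m => ?_) (tendsto_zero_iff_norm_tendsto_zero.1 h0)
    unfold fockEntry
    split_ifs <;> simp

lemma qInf_eq_fockEntry_of_shift_eq (hlt : ∀ i j : Fin d, i ≠ j → ‖q i j‖ < 1) {m : ℕ}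
    (h : shift^[m] β = shift^[m] γ) :
    qInf q γ β = fockEntry q (prefixList β m) (prefixList γ m) :=
  tendsto_nhds_unique (tendsto_fockEntry_prefixList hlt β γ)
    (tendsto_atTop_of_eventually_const fun _ hn => fockEntry_prefixList_of_shift_eq h hn)

lemma qInf_eq_zero_of_forall_shift_ne (hlt : ∀ i j : Fin d, i ≠ j → ‖q i j‖ < 1)
    (h : ¬ ∃ m, shift^[m] β = shift^[m] γ) : qInf q γ β = 0 := by
  obtain ⟨r, hr, hq⟩ := exists_nnnorm_le_of_nnnorm_lt_one q hlt
  exact tendsto_nhds_unique (tendsto_qMul_prefixList hlt β γ) (tendsto_qMul_prefixList_zero hr hq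
    (not_eventually.1 (mt exists_shift_eq_of_eventually_perm h)))

end limits

section forms

variable {q}

lemma fockEntry_self (A : List (Fin d)) : fockEntry q A A = 1 := by
  rw [fockEntry, if_pos (List.Perm.refl A), qMul_self]

lemma fockForm_mapDomain {ι κ : Type*} (f : ι → List (Fin d)) (g : κ → List (Fin d))
    (x : ι →₀ ℂ) (y : κ →₀ ℂ) :
    fockForm q (x.mapDomain f) (y.mapDomain g) =
      x.sum fun a xa => y.sum fun b yb => starRingEnd ℂ xa * yb * fockEntry q (f a) (g b) := by
  change ((x.mapDomain f).sum fun a xa => (y.mapDomain g).sum fun b yb =>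
    starRingEnd ℂ xa * yb * fockEntry q a b) = _
  rw [Finsupp.sum_mapDomain_index (by simp) (by simp [add_mul, Finsupp.sum_add])]
  congr 1
  funext a xa
  rw [Finsupp.sum_mapDomain_index (by simp) (by simp [mul_add, add_mul])]

variable {α : ℕ → Fin d}

lemma tendsto_fockForm_mapDomain_prefixList (hlt : ∀ i j : Fin d, i ≠ j → ‖q i j‖ < 1)
    (x y : {β : ℕ → Fin d // equivTail β α} →₀ ℂ) :
    Tendsto (fun m => fockForm q (x.mapDomain fun β => prefixList β.1 m)
      (y.mapDomain fun β => prefixList β.1 m)) atTop (𝓝 (tailForm q α x y)) := by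
  simp only [fockForm_mapDomain]
  exact tendsto_finsetSum _ fun β _ => tendsto_finsetSum _ fun γ _ =>
    (tendsto_fockEntry_prefixList hlt β.1 γ.1).const_mul _

variable (hF : ∀ (k : ℕ) (x : List (Fin d) →₀ ℂ), (∀ γ ∈ x.support, γ.length = k) →
  0 ≤ (fockForm q x x).re ∧ (fockForm q x x).im = 0)
include hF

lemma fockForm_mapDomain_self {ι : Type*} {f : ι → List (Fin d)} {k : ℕ}
    (hf : ∀ i, (f i).length = k) (x : ι →₀ ℂ) :
    0 ≤ (fockForm q (x.mapDomain f) (x.mapDomain f)).re ∧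
      (fockForm q (x.mapDomain f) (x.mapDomain f)).im = 0 := by
  classical
  refine hF k _ fun γ hγ => ?_
  obtain ⟨i, -, rfl⟩ := Finset.mem_image.1 (Finsupp.mapDomain_support hγ)
  exact hf i

lemma fockEntry_eq_conj {A B : List (Fin d)} (hAB : A.length = B.length) :
    fockEntry q A B = starRingEnd ℂ (fockEntry q B A) := by
  -- the Fock form is real at `e_A + c • e_B`
  have hpair : ∀ c : ℂ, (c * fockEntry q A B + starRingEnd ℂ c * fockEntry q B A).im = 0 := by
    intro c
    have := (fockForm_mapDomain_self hF (f := ![A, B]) (k := B.length)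
      (by simp [Fin.forall_fin_two, hAB]) (Finsupp.equivFunOnFinite.symm ![1, c])).2
    rw [fockForm_mapDomain] at this
    simp [Finsupp.sum_fintype, Fin.sum_univ_two, fockEntry_self] at this ⊢
    linarith
  have h1 := hpair 1
  have h2 := hpair Complex.I
  simp [Complex.ext_iff] at h1 h2 ⊢
  constructor <;> linarith

lemma qInf_eq_conj (hlt : ∀ i j : Fin d, i ≠ j → ‖q i j‖ < 1) (β γ : ℕ → Fin d) :
    qInf q γ β = starRingEnd ℂ (qInf q β γ) :=
  tendsto_nhds_unique (tendsto_fockEntry_prefixList hlt β γ)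
    (((Complex.continuous_conj.tendsto _).comp (tendsto_fockEntry_prefixList hlt γ β)).congr
      fun m => (fockEntry_eq_conj hF (by rw [length_prefixList, length_prefixList])).symm)

lemma tailForm_eq_conj (hlt : ∀ i j : Fin d, i ≠ j → ‖q i j‖ < 1)
    (x y : {β : ℕ → Fin d // equivTail β α} →₀ ℂ) :
    tailForm q α x y = starRingEnd ℂ (tailForm q α y x) := by
  rw [tailForm, tailForm, Finset.sum_comm, map_sum]
  refine sum_congr rfl fun γ _ => ?_
  rw [map_sum]
  refine sum_congr rfl fun β _ => ?_
  rw [qInf_eq_conj hF hlt γ.1 β.1]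
  simp only [map_mul, Complex.conj_conj]
  ring

lemma tailForm_self (hlt : ∀ i j : Fin d, i ≠ j → ‖q i j‖ < 1)
    (x : {β : ℕ → Fin d // equivTail β α} →₀ ℂ) :
    0 ≤ (tailForm q α x x).re ∧ (tailForm q α x x).im = 0 := by
  have hclosed : IsClosed {z : ℂ | 0 ≤ z.re ∧ z.im = 0} :=
    (isClosed_le continuous_const Complex.continuous_re).inter
      (isClosed_eq Complex.continuous_im continuous_const)
  exact hclosed.mem_of_tendsto (tendsto_fockForm_mapDomain_prefixList hlt x x)
    (Eventually.of_forall fun m =>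
      fockForm_mapDomain_self hF (fun β : {β // equivTail β α} => length_prefixList β.1 m) x)

end forms

theorem statement6_general {d : ℕ} (q : Fin d → Fin d → ℂ)
    (hlt : ∀ i j : Fin d, i ≠ j → ‖q i j‖ < 1)
    (α : ℕ → Fin d)
    (hFpos : ∀ (k : ℕ) (x : List (Fin d) →₀ ℂ), (∀ γ ∈ x.support, γ.length = k) →
      0 ≤ (fockForm q x x).re ∧ (fockForm q x x).im = 0) :
    (∀ x y : {β : ℕ → Fin d // equivTail β α} →₀ ℂ,
      tailForm q α x y = (starRingEnd ℂ) (tailForm q α y x)) ∧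
    (∀ x : {β : ℕ → Fin d // equivTail β α} →₀ ℂ,
      0 ≤ (tailForm q α x x).re ∧ (tailForm q α x x).im = 0) ∧
    (∀ β γ : ℕ → Fin d, equivTail β α → equivTail γ α →
      ∀ m : ℕ, shift^[m] β = shift^[m] γ →
        qInf q γ β = fockEntry q (prefixList β m) (prefixList γ m)) ∧
    (∀ β γ : ℕ → Fin d, equivTail β α → equivTail γ α →
      (¬∃ m : ℕ, shift^[m] β = shift^[m] γ) → qInf q γ β = 0) :=
  ⟨tailForm_eq_conj hFpos hlt, tailForm_self hFpos hlt,
    fun _ _ _ _ _ h => qInf_eq_fockEntry_of_shift_eq hlt h,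
    fun _ _ _ _ h => qInf_eq_zero_of_forall_shift_ne hlt h⟩

theorem statement6 {d : ℕ} (hd : 2 ≤ d) (q : Fin d → Fin d → ℂ)
    (hsym : ∀ i j : Fin d, i ≠ j → q i j = (starRingEnd ℂ) (q j i))
    (hlt : ∀ i j : Fin d, i ≠ j → ‖q i j‖ < 1)
    (α : ℕ → Fin d)
    (hFpos : ∀ (k : ℕ) (x : List (Fin d) →₀ ℂ), (∀ γ ∈ x.support, γ.length = k) →
      0 ≤ (fockForm q x x).re ∧ (fockForm q x x).im = 0) :
    (∀ x y : {β : ℕ → Fin d // equivTail β α} →₀ ℂ,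
      tailForm q α x y = (starRingEnd ℂ) (tailForm q α y x)) ∧
    (∀ x : {β : ℕ → Fin d // equivTail β α} →₀ ℂ,
      0 ≤ (tailForm q α x x).re ∧ (tailForm q α x x).im = 0) ∧
    (∀ β γ : ℕ → Fin d, equivTail β α → equivTail γ α →
      ∀ m : ℕ, shift^[m] β = shift^[m] γ →
        qInf q γ β = fockEntry q (prefixList β m) (prefixList γ m)) ∧
    (∀ β γ : ℕ → Fin d, equivTail β α → equivTail γ α →
      (¬∃ m : ℕ, shift^[m] β = shift^[m] γ) → qInf q γ β = 0) :=
  statement6_general q hlt α hFpos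

end QCstar
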